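/- arXiv:2405.15762 — 4 statements merged into one kernel-verified Lean document; each statement's English description precedes it below -/
import Mathlib

section
/- Let ω₁, ω₂ be positive integers with ω₁ ≠ ω₂, ω₁ ≠ 2ω₂ and ω₂ ≠ 2ω₁, and let a₁ ≠ 0 and a₂ be real perturbation amplitudes. Then for every fixed pair (θ̂₁, θ̂₂) ∈ ℝ², the average over one period of the demodulated payoff of player 1 equals the pseudogradient of J₁, namely: (1/(2π)) ∫₀^{2π} (2/a₁) sin(ω₁ t) · J₁(θ̂₁ + a₁ sin(ω₁ t), θ̂₂ + a₂ sin(ω₂ t)) dt = H¹₁₁ θ̂₁ + H¹₁₂ θ̂₂ + h¹₁. -/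
open Real MeasureTheory

lemma intSin (k : ℤ) : ∫ t in (0:ℝ)..(2*π), Real.sin ((k:ℝ)*t) = 0 := by
  rcases eq_or_ne k 0 with h | h
  · simp [h]
  · have hk : (k:ℝ) ≠ 0 := Int.cast_ne_zero.mpr h
    rw [intervalIntegral.integral_comp_mul_left (fun x => Real.sin x) hk]
    simp [Real.cos_int_mul_two_pi]

lemma intCos (k : ℤ) (h : k ≠ 0) : ∫ t in (0:ℝ)..(2*π), Real.cos ((k:ℝ)*t) = 0 := by
  have hk : (k:ℝ) ≠ 0 := Int.cast_ne_zero.mpr h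
  rw [intervalIntegral.integral_comp_mul_left (fun x => Real.cos x) hk]
  rw [_root_.integral_cos]
  have h2 : Real.sin ((k:ℝ)*(2*π)) = 0 := by
    have e : (k:ℝ)*(2*π) = ((2*k : ℤ):ℝ) * π := by push_cast; ring
    rw [e]; exact Real.sin_int_mul_pi _
  simp [h2]

lemma id2 (x : ℝ) : Real.sin x ^ 2 = 1/2 - 1/2 * Real.cos (2*x) := by
  rw [Real.cos_two_mul]; linear_combination Real.sin_sq_add_cos_sq x

lemma id3 (x : ℝ) : Real.sin x ^ 3 = 3/4 * Real.sin x - 1/4 * Real.sin (3*x) := by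
  rw [Real.sin_three_mul]; ring

lemma id4 (x y : ℝ) : Real.sin x * Real.sin y = 1/2 * Real.cos (x-y) - 1/2 * Real.cos (x+y) := by
  rw [Real.cos_sub, Real.cos_add]; ring

lemma id5 (x y : ℝ) : Real.sin x ^ 2 * Real.sin y
    = 1/2 * Real.sin y - 1/4 * Real.sin (2*x+y) + 1/4 * Real.sin (2*x-y) := by
  rw [Real.sin_add, Real.sin_sub, Real.sin_two_mul, Real.cos_two_mul]
  linear_combination Real.sin y * Real.sin_sq_add_cos_sq x

lemma id6 (x y : ℝ) : Real.sin x * Real.sin y ^ 2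
    = 1/2 * Real.sin x - 1/4 * Real.sin (x+2*y) - 1/4 * Real.sin (x-2*y) := by
  rw [Real.sin_add, Real.sin_sub, Real.sin_two_mul, Real.cos_two_mul]
  linear_combination Real.sin x * Real.sin_sq_add_cos_sq y

lemma M2 (n : ℤ) (hn : n ≠ 0) : ∫ t in (0:ℝ)..(2*π), Real.sin ((n:ℝ)*t) ^ 2 = π := by
  have e : (∫ t in (0:ℝ)..(2*π), Real.sin ((n:ℝ)*t) ^ 2)
      = ∫ t in (0:ℝ)..(2*π), (1/2 - 1/2 * Real.cos (((2*n:ℤ):ℝ)*t)) :=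
    intervalIntegral.integral_congr (fun t _ => by
      rw [id2]; congr 2; push_cast; ring)
  rw [e, intervalIntegral.integral_sub intervalIntegrable_const
    (by apply Continuous.intervalIntegrable; fun_prop),
    intervalIntegral.integral_const_mul, intCos _ (by omega)]
  simp; ring

lemma M3 (n : ℤ) : ∫ t in (0:ℝ)..(2*π), Real.sin ((n:ℝ)*t) ^ 3 = 0 := by
  have e : (∫ t in (0:ℝ)..(2*π), Real.sin ((n:ℝ)*t) ^ 3)
      = ∫ t in (0:ℝ)..(2*π), (3/4 * Real.sin ((n:ℝ)*t) - 1/4 * Real.sin (((3*n:ℤ):ℝ)*t)) :=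
    intervalIntegral.integral_congr (fun t _ => by
      rw [id3]; congr 2; push_cast; ring)
  rw [e, intervalIntegral.integral_sub (by apply Continuous.intervalIntegrable; fun_prop)
    (by apply Continuous.intervalIntegrable; fun_prop),
    intervalIntegral.integral_const_mul, intervalIntegral.integral_const_mul, intSin, intSin]
  ring

lemma M4 (n m : ℤ) (h1 : n - m ≠ 0) (h2 : n + m ≠ 0) :
    ∫ t in (0:ℝ)..(2*π), Real.sin ((n:ℝ)*t) * Real.sin ((m:ℝ)*t) = 0 := by
  have e : (∫ t in (0:ℝ)..(2*π), Real.sin ((n:ℝ)*t) * Real.sin ((m:ℝ)*t))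
      = ∫ t in (0:ℝ)..(2*π), (1/2 * Real.cos (((n-m:ℤ):ℝ)*t) - 1/2 * Real.cos (((n+m:ℤ):ℝ)*t)) :=
    intervalIntegral.integral_congr (fun t _ => by
      rw [id4]; congr 2 <;> (push_cast; ring))
  rw [e, intervalIntegral.integral_sub (by apply Continuous.intervalIntegrable; fun_prop)
    (by apply Continuous.intervalIntegrable; fun_prop),
    intervalIntegral.integral_const_mul, intervalIntegral.integral_const_mul,
    intCos _ h1, intCos _ h2]
  ring

lemma M5 (n m : ℤ) : ∫ t in (0:ℝ)..(2*π), Real.sin ((n:ℝ)*t) ^ 2 * Real.sin ((m:ℝ)*t) = 0 := by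
  have e : (∫ t in (0:ℝ)..(2*π), Real.sin ((n:ℝ)*t) ^ 2 * Real.sin ((m:ℝ)*t))
      = ∫ t in (0:ℝ)..(2*π), (1/2 * Real.sin ((m:ℝ)*t) - 1/4 * Real.sin (((2*n+m:ℤ):ℝ)*t)
          + 1/4 * Real.sin (((2*n-m:ℤ):ℝ)*t)) :=
    intervalIntegral.integral_congr (fun t _ => by
      rw [id5]; congr 2; · congr 2 <;> (push_cast; ring)
      · congr 1; push_cast; ring)
  rw [e, intervalIntegral.integral_add (by apply Continuous.intervalIntegrable; fun_prop)
    (by apply Continuous.intervalIntegrable; fun_prop),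
    intervalIntegral.integral_sub (by apply Continuous.intervalIntegrable; fun_prop)
    (by apply Continuous.intervalIntegrable; fun_prop),
    intervalIntegral.integral_const_mul, intervalIntegral.integral_const_mul,
    intervalIntegral.integral_const_mul, intSin, intSin, intSin]
  ring

lemma M6 (n m : ℤ) : ∫ t in (0:ℝ)..(2*π), Real.sin ((n:ℝ)*t) * Real.sin ((m:ℝ)*t) ^ 2 = 0 := by
  have e : (∫ t in (0:ℝ)..(2*π), Real.sin ((n:ℝ)*t) * Real.sin ((m:ℝ)*t) ^ 2)
      = ∫ t in (0:ℝ)..(2*π), (1/2 * Real.sin ((n:ℝ)*t) - 1/4 * Real.sin (((n+2*m:ℤ):ℝ)*t)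
          - 1/4 * Real.sin (((n-2*m:ℤ):ℝ)*t)) :=
    intervalIntegral.integral_congr (fun t _ => by
      rw [id6]; congr 2; · congr 2 <;> (push_cast; ring)
      · congr 1; push_cast; ring)
  rw [e, intervalIntegral.integral_sub (by apply Continuous.intervalIntegrable; fun_prop)
    (by apply Continuous.intervalIntegrable; fun_prop),
    intervalIntegral.integral_sub (by apply Continuous.intervalIntegrable; fun_prop)
    (by apply Continuous.intervalIntegrable; fun_prop),
    intervalIntegral.integral_const_mul, intervalIntegral.integral_const_mul,
    intervalIntegral.integral_const_mul, intSin, intSin, intSin]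
  ring

lemma master (n m : ℤ) (hn : n ≠ 0) (h1 : n - m ≠ 0) (h2 : n + m ≠ 0) (c₁ c₂ c₃ c₄ c₅ c₆ : ℝ) :
    ∫ t in (0:ℝ)..(2*π),
      (c₁ * Real.sin ((n:ℝ)*t)
        + (c₂ * Real.sin ((n:ℝ)*t) ^ 2
        + (c₃ * (Real.sin ((n:ℝ)*t) * Real.sin ((m:ℝ)*t))
        + (c₄ * Real.sin ((n:ℝ)*t) ^ 3
        + (c₅ * (Real.sin ((n:ℝ)*t) ^ 2 * Real.sin ((m:ℝ)*t))
        + c₆ * (Real.sin ((n:ℝ)*t) * Real.sin ((m:ℝ)*t) ^ 2)))))) = c₂ * π := by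
  rw [intervalIntegral.integral_add (by apply Continuous.intervalIntegrable; fun_prop)
      (by apply Continuous.intervalIntegrable; fun_prop),
    intervalIntegral.integral_add (by apply Continuous.intervalIntegrable; fun_prop)
      (by apply Continuous.intervalIntegrable; fun_prop),
    intervalIntegral.integral_add (by apply Continuous.intervalIntegrable; fun_prop)
      (by apply Continuous.intervalIntegrable; fun_prop),
    intervalIntegral.integral_add (by apply Continuous.intervalIntegrable; fun_prop)
      (by apply Continuous.intervalIntegrable; fun_prop),
    intervalIntegral.integral_add (by apply Continuous.intervalIntegrable; fun_prop)
      (by apply Continuous.intervalIntegrable; fun_prop)]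
  simp only [intervalIntegral.integral_const_mul]
  rw [intSin, M2 n hn, M4 n m h1 h2, M3, M5, M6]
  ring

/-- the average over one period of player 1's demodulated payoff equals
the first component of the pseudogradient, `H¹₁₁ θ̂₁ + H¹₁₂ θ̂₂ + h¹₁`. -/
theorem average_demodulated_payoff_player1
    (ω1 ω2 : ℕ) (hω1 : 0 < ω1) (hω2 : 0 < ω2)
    (hne : ω1 ≠ ω2) (hne12 : ω1 ≠ 2 * ω2) (hne21 : ω2 ≠ 2 * ω1)
    (a1 a2 : ℝ) (ha1 : a1 ≠ 0)
    (H111 H122 H112 h11 h12 c1 θ1 θ2 : ℝ) :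
    (1 / (2 * π)) * ∫ t in (0 : ℝ)..(2 * π),
        (2 / a1) * Real.sin ((ω1 : ℝ) * t) *
          ((H111 / 2) * (θ1 + a1 * Real.sin ((ω1 : ℝ) * t)) ^ 2
            + (H122 / 2) * (θ2 + a2 * Real.sin ((ω2 : ℝ) * t)) ^ 2
            + H112 * (θ1 + a1 * Real.sin ((ω1 : ℝ) * t)) * (θ2 + a2 * Real.sin ((ω2 : ℝ) * t))
            + h11 * (θ1 + a1 * Real.sin ((ω1 : ℝ) * t))
            + h12 * (θ2 + a2 * Real.sin ((ω2 : ℝ) * t)) + c1)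
      = H111 * θ1 + H112 * θ2 + h11 := by
  have e : (∫ t in (0 : ℝ)..(2 * π),
        (2 / a1) * Real.sin ((ω1 : ℝ) * t) *
          ((H111 / 2) * (θ1 + a1 * Real.sin ((ω1 : ℝ) * t)) ^ 2
            + (H122 / 2) * (θ2 + a2 * Real.sin ((ω2 : ℝ) * t)) ^ 2
            + H112 * (θ1 + a1 * Real.sin ((ω1 : ℝ) * t)) * (θ2 + a2 * Real.sin ((ω2 : ℝ) * t))
            + h11 * (θ1 + a1 * Real.sin ((ω1 : ℝ) * t))
            + h12 * (θ2 + a2 * Real.sin ((ω2 : ℝ) * t)) + c1))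
      = ∫ t in (0:ℝ)..(2*π),
        ((2 / a1 * ((H111 / 2) * θ1^2 + (H122/2) * θ2^2 + H112 * θ1 * θ2 + h11 * θ1 + h12 * θ2 + c1)) * Real.sin (((ω1:ℤ):ℝ)*t)
          + ((2 / a1 * (a1 * (H111 * θ1 + H112 * θ2 + h11))) * Real.sin (((ω1:ℤ):ℝ)*t) ^ 2
          + ((2 / a1 * (a2 * (H122 * θ2 + H112 * θ1 + h12))) * (Real.sin (((ω1:ℤ):ℝ)*t) * Real.sin (((ω2:ℤ):ℝ)*t))
          + ((2 / a1 * ((H111/2) * a1^2)) * Real.sin (((ω1:ℤ):ℝ)*t) ^ 3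
          + ((2 / a1 * (H112 * a1 * a2)) * (Real.sin (((ω1:ℤ):ℝ)*t) ^ 2 * Real.sin (((ω2:ℤ):ℝ)*t))
          + (2 / a1 * ((H122/2) * a2^2)) * (Real.sin (((ω1:ℤ):ℝ)*t) * Real.sin (((ω2:ℤ):ℝ)*t) ^ 2)))))) :=
    intervalIntegral.integral_congr (fun t _ => by push_cast; ring)
  rw [e, master (ω1:ℤ) (ω2:ℤ) (by omega) (by omega) (by omega)]
  field_simp
end

section
/- Let ω₁, ω₂ be positive integers with ω₁ ≠ ω₂, ω₁ ≠ 2ω₂ and ω₂ ≠ 2ω₁, and let a₂ ≠ 0 and a₁ be real perturbation amplitudes. Then for every fixed pair (θ̂₁, θ̂₂) ∈ ℝ², the average over one period of the demodulated payoff of player 2 equals the pseudogradient of J₂, namely: (1/(2π)) ∫₀^{2π} (2/a₂) sin(ω₂ t) · J₂(θ̂₁ + a₁ sin(ω₁ t), θ̂₂ + a₂ sin(ω₂ t)) dt = H²₂₁ θ̂₁ + H²₂₂ θ̂₂ + h²₂. -/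
/-!
With `sᵢ t = sin (ωᵢ t)`, the demodulated payoff `s₂ t · J₂` is a polynomial in `s₁ t` and
`s₂ t`. Its terms of odd total degree
are odd `2π`-periodic functions of `t` and average to zero. Of the remaining two, `s₁ s₂`
averages to zero by orthogonality (`ω₁ ≠ ω₂`) and `s₂²` averages to `1/2`, which the
demodulation gain `2 / a₂` turns into `∂J₂/∂θ₂`.
-/

open Real intervalIntegral Function

theorem sin_int_mul_periodic (k : ℤ) : Periodic (fun t ↦ sin (k * t)) (2 * π) := fun t ↦ by
  simp [mul_add]

theorem Function.Periodic.intervalIntegral_eq_zero_of_odd {f : ℝ → ℝ} {T : ℝ}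
    (hf : Periodic f T) (hodd : ∀ x, f (-x) = -f x) (t : ℝ) :
    ∫ x in t..t + T, f x = 0 := by
  have hsymm : ∫ x in t..t + T, f x = ∫ x in -(T / 2)..T / 2, f x := by
    rw [hf.intervalIntegral_add_eq t (-(T / 2))]; ring_nf
  have hneg : ∫ x in -(T / 2)..T / 2, f x = -∫ x in -(T / 2)..T / 2, f x := by
    conv_lhs => rw [← neg_neg (T / 2), ← integral_comp_neg]
    simp only [neg_neg, hodd, intervalIntegral.integral_neg]
  linarith

theorem integral_cos_int_mul_eq_zero {k : ℤ} (hk : k ≠ 0) :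
    ∫ t in (0 : ℝ)..2 * π, cos (k * t) = 0 := by
  rw [integral_comp_mul_left cos (Int.cast_ne_zero.mpr hk), integral_cos, mul_zero, sin_zero,
    (sin_periodic.int_mul k).eq, sin_zero, sub_zero, smul_zero]

theorem integral_sin_int_mul_sq {k : ℤ} (hk : k ≠ 0) :
    ∫ t in (0 : ℝ)..2 * π, sin (k * t) ^ 2 = π := by
  have hk' : (k : ℝ) ≠ 0 := Int.cast_ne_zero.mpr hk
  rw [integral_comp_mul_left (fun t ↦ sin t ^ 2) hk', integral_sin_sq,
    (sin_periodic.int_mul k).eq]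
  simp only [mul_zero, sin_zero, zero_mul, sub_zero, zero_add, smul_eq_mul]
  field_simp

theorem integral_sin_nat_mul_mul_sin_nat_mul_of_ne {n m : ℕ} (h : n ≠ m) :
    ∫ t in (0 : ℝ)..2 * π, sin (n * t) * sin (m * t) = 0 := by
  have hprod : ∀ t : ℝ, sin (n * t) * sin (m * t)
      = (cos (((n - m : ℤ) : ℝ) * t) - cos (((n + m : ℤ) : ℝ) * t)) / 2 := fun t ↦ by
    push_cast; rw [sub_mul, add_mul, cos_sub, cos_add]; ring
  simp_rw [hprod]
  rw [integral_div, integral_sub (by apply Continuous.intervalIntegrable; fun_prop)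
    (by apply Continuous.intervalIntegrable; fun_prop),
    integral_cos_int_mul_eq_zero (by omega), integral_cos_int_mul_eq_zero (by omega)]
  norm_num

theorem average_demodulated_quadratic_payoff {s₁ s₂ : ℝ → ℝ} (hs₁ : Continuous s₁)
    (hs₂ : Continuous s₂) (hs₁_periodic : Periodic s₁ (2 * π)) (hs₂_periodic : Periodic s₂ (2 * π))
    (hs₁_odd : ∀ t, s₁ (-t) = -s₁ t) (hs₂_odd : ∀ t, s₂ (-t) = -s₂ t)
    (horth : ∫ t in (0 : ℝ)..2 * π, s₁ t * s₂ t = 0)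
    (hnorm : ∫ t in (0 : ℝ)..2 * π, s₂ t ^ 2 = π)
    {a2 : ℝ} (ha2 : a2 ≠ 0) (a1 H211 H222 H221 h21 h22 c2 θ1 θ2 : ℝ) :
    (1 / (2 * π)) * ∫ t in (0 : ℝ)..2 * π,
        (2 / a2) * s₂ t * ((H211 / 2) * (θ1 + a1 * s₁ t) ^ 2 + (H222 / 2) * (θ2 + a2 * s₂ t) ^ 2
          + H221 * (θ1 + a1 * s₁ t) * (θ2 + a2 * s₂ t) + h21 * (θ1 + a1 * s₁ t)
          + h22 * (θ2 + a2 * s₂ t) + c2)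
      = H221 * θ1 + H222 * θ2 + h22 := by
  set g : ℝ → ℝ := fun t ↦ (2 / a2) * s₂ t * ((H211 / 2) * θ1 ^ 2 + (H222 / 2) * θ2 ^ 2
      + H221 * θ1 * θ2 + h21 * θ1 + h22 * θ2 + c2 + (H211 / 2) * a1 ^ 2 * s₁ t ^ 2
      + H221 * a1 * a2 * s₁ t * s₂ t + (H222 / 2) * a2 ^ 2 * s₂ t ^ 2) with hg
  have hsplit : ∀ t, (2 / a2) * s₂ t * ((H211 / 2) * (θ1 + a1 * s₁ t) ^ 2
      + (H222 / 2) * (θ2 + a2 * s₂ t) ^ 2 + H221 * (θ1 + a1 * s₁ t) * (θ2 + a2 * s₂ t)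
      + h21 * (θ1 + a1 * s₁ t) + h22 * (θ2 + a2 * s₂ t) + c2)
      = g t + (2 / a2) * a1 * (H211 * θ1 + H221 * θ2 + h21) * (s₁ t * s₂ t)
        + (2 / a2) * a2 * (H221 * θ1 + H222 * θ2 + h22) * s₂ t ^ 2 := fun t ↦ by
    simp only [hg]; ring
  have hg_periodic : Periodic g (2 * π) := fun t ↦ by
    simp only [hg, hs₁_periodic t, hs₂_periodic t]
  have hg_odd : ∀ t, g (-t) = -g t := fun t ↦ by
    simp only [hg, hs₁_odd, hs₂_odd]; ring
  have hg_int : ∫ t in (0 : ℝ)..2 * π, g t = 0 := by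
    simpa using hg_periodic.intervalIntegral_eq_zero_of_odd hg_odd 0
  simp_rw [hsplit]
  rw [integral_add, integral_add, integral_const_mul, integral_const_mul, hg_int, horth, hnorm]
  · field_simp; ring
  all_goals exact Continuous.intervalIntegrable (by fun_prop) _ _

theorem average_demodulated_payoff_player2_general
    (ω1 ω2 : ℕ) (hω2 : 0 < ω2)
    (hne : ω1 ≠ ω2)
    (a1 a2 : ℝ) (ha2 : a2 ≠ 0)
    (H211 H222 H221 h21 h22 c2 θ1 θ2 : ℝ) :
    (1 / (2 * π)) * ∫ t in (0 : ℝ)..(2 * π),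
        (2 / a2) * Real.sin ((ω2 : ℝ) * t) *
          ((H211 / 2) * (θ1 + a1 * Real.sin ((ω1 : ℝ) * t)) ^ 2
            + (H222 / 2) * (θ2 + a2 * Real.sin ((ω2 : ℝ) * t)) ^ 2
            + H221 * (θ1 + a1 * Real.sin ((ω1 : ℝ) * t)) * (θ2 + a2 * Real.sin ((ω2 : ℝ) * t))
            + h21 * (θ1 + a1 * Real.sin ((ω1 : ℝ) * t))
            + h22 * (θ2 + a2 * Real.sin ((ω2 : ℝ) * t)) + c2)
      = H221 * θ1 + H222 * θ2 + h22 := by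
  have hω2' : (ω2 : ℤ) ≠ 0 := by exact_mod_cast hω2.ne'
  refine average_demodulated_quadratic_payoff (s₁ := fun t ↦ sin (ω1 * t))
    (s₂ := fun t ↦ sin (ω2 * t)) (by fun_prop) (by fun_prop) ?_ ?_ ?_ ?_
    (integral_sin_nat_mul_mul_sin_nat_mul_of_ne hne) ?_ ha2 _ _ _ _ _ _ _ _ _
  · exact_mod_cast sin_int_mul_periodic ω1
  · exact_mod_cast sin_int_mul_periodic ω2
  · intro t; simp [mul_neg]
  · intro t; simp [mul_neg]
  · exact_mod_cast integral_sin_int_mul_sq hω2'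

/-- the average over one period of player 2's demodulated payoff equals
the second component of the pseudogradient, `H²₂₁ θ̂₁ + H²₂₂ θ̂₂ + h²₂`. -/
theorem average_demodulated_payoff_player2
    (ω1 ω2 : ℕ) (hω1 : 0 < ω1) (hω2 : 0 < ω2)
    (hne : ω1 ≠ ω2) (hne12 : ω1 ≠ 2 * ω2) (hne21 : ω2 ≠ 2 * ω1)
    (a1 a2 : ℝ) (ha2 : a2 ≠ 0)
    (H211 H222 H221 h21 h22 c2 θ1 θ2 : ℝ) :
    (1 / (2 * π)) * ∫ t in (0 : ℝ)..(2 * π),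
        (2 / a2) * Real.sin ((ω2 : ℝ) * t) *
          ((H211 / 2) * (θ1 + a1 * Real.sin ((ω1 : ℝ) * t)) ^ 2
            + (H222 / 2) * (θ2 + a2 * Real.sin ((ω2 : ℝ) * t)) ^ 2
            + H221 * (θ1 + a1 * Real.sin ((ω1 : ℝ) * t)) * (θ2 + a2 * Real.sin ((ω2 : ℝ) * t))
            + h21 * (θ1 + a1 * Real.sin ((ω1 : ℝ) * t))
            + h22 * (θ2 + a2 * Real.sin ((ω2 : ℝ) * t)) + c2)
      = H221 * θ1 + H222 * θ2 + h22 :=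
  average_demodulated_payoff_player2_general ω1 ω2 hω2 hne a1 a2 ha2 H211 H222 H221 h21 h22 c2 θ1 θ2
end

section
/- Let H¹₁₁, H¹₁₂, H²₂₁, H²₂₂, K₁, K₂ be real constants and ω > 0, and assume Assumption 1: |H¹₁₂K₂| < |H¹₁₁K₁|, |H²₂₁K₁| < |H²₂₂K₂|, H¹₁₁K₁ < 0 and H²₂₂K₂ < 0. Set α₁ = |H¹₁₁K₁| − |H¹₁₂K₂|, α₂ = |H²₂₂K₂| − |H²₂₁K₁| and α₀ = min(α₁, α₂). Then for every (x₁, x₂) ∈ ℝ²: 2x₁·(1/ω)(H¹₁₁K₁ sgn(x₁) + H¹₁₂K₂ sgn(x₂)) + 2x₂·(1/ω)(H²₂₁K₁ sgn(x₁) + H²₂₂K₂ sgn(x₂)) ≤ −(2α₀/ω)(|x₁| + |x₂|) ≤ −(2α₀/ω)·√(x₁² + x₂²). In particular, along any solution of the average closed-loop system dĜ₁/dt = (1/ω)(H¹₁₁K₁ sgn(Ĝ₁) + H¹₁₂K₂ sgn(Ĝ₂)), dĜ₂/dt = (1/ω)(H²₂₁K₁ sgn(Ĝ₁) + H²₂₂K₂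 sgn(Ĝ₂)), the Lyapunov function V = Ĝ₁² + Ĝ₂² satisfies dV/dt ≤ −(2α₀/ω)√V. -/
/-!
Along the average system, `dV/dt = 2⟨x, F(x)⟩`, and since `x * sign x = |x|` while
`|x * sign y| ≤ |x|`, the diagonal terms contribute `H¹₁₁K₁ |x₁| + H²₂₂K₂ |x₂|` and the
off-diagonal ones at most `|H¹₁₂K₂| |x₁| + |H²₂₁K₁| |x₂|`. Diagonal dominance with negative
diagonal makes each row sum at most `-α₀`, giving `dV/dt ≤ -2α₀/ω (|x₁| + |x₂|)`, and the
ℓ¹ norm dominates the Euclidean one `√V`.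
-/

open Real

namespace Real

theorem mul_sign_self (x : ℝ) : x * sign x = |x| := by
  rcases lt_trichotomy x 0 with hx | rfl | hx
  · rw [sign_of_neg hx, abs_of_neg hx, mul_neg_one]
  · simp
  · rw [sign_of_pos hx, abs_of_pos hx, mul_one]

theorem abs_sign_le_one (x : ℝ) : |sign x| ≤ 1 := by
  rcases sign_apply_eq x with h | h | h <;> simp [h]

theorem mul_mul_sign_le (c x y : ℝ) : c * (x * sign y) ≤ |c| * |x| :=
  calc c * (x * sign y) ≤ |c| * (|x| * |sign y|) := by
        rw [← abs_mul, ← abs_mul]; exact le_abs_self _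
    _ ≤ |c| * |x| := by
        gcongr
        exact mul_le_of_le_one_right (abs_nonneg x) (abs_sign_le_one y)

theorem sqrt_sq_add_sq_le_abs_add_abs (x y : ℝ) : √(x ^ 2 + y ^ 2) ≤ |x| + |y| := by
  rw [sqrt_le_iff, ← sq_abs x, ← sq_abs y]
  exact ⟨by positivity, by nlinarith [abs_nonneg x, abs_nonneg y]⟩

theorem mul_sign_feedback_le {a b c d α : ℝ} (hrow₁ : a + |b| ≤ -α) (hrow₂ : d + |c| ≤ -α)
    (x₁ x₂ : ℝ) :
    x₁ * (a * sign x₁ + b * sign x₂) + x₂ * (c * sign x₁ + d * sign x₂)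
      ≤ -α * (|x₁| + |x₂|) := by
  have hb := mul_mul_sign_le b x₁ x₂
  have hc := mul_mul_sign_le c x₂ x₁
  calc x₁ * (a * sign x₁ + b * sign x₂) + x₂ * (c * sign x₁ + d * sign x₂)
      = a * |x₁| + b * (x₁ * sign x₂) + c * (x₂ * sign x₁) + d * |x₂| := by
        rw [← mul_sign_self x₁, ← mul_sign_self x₂]; ring
    _ ≤ (a + |b|) * |x₁| + (d + |c|) * |x₂| := by linarith
    _ ≤ -α * |x₁| + -α * |x₂| := by gcongr
    _ = -α * (|x₁| + |x₂|) := by ring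

end Real

theorem HasDerivAt.sq_add_sq {f g : ℝ → ℝ} {f' g' t : ℝ} (hf : HasDerivAt f f' t)
    (hg : HasDerivAt g g' t) :
    HasDerivAt (fun s => f s ^ 2 + g s ^ 2) (2 * f t * f' + 2 * g t * g') t :=
  ((hf.pow 2).add (hg.pow 2)).congr_deriv (by norm_num)

/-- under Assumption 1 (strict diagonal dominance of `HK` with negative
diagonal), the pointwise Lyapunov inequality holds, and along any solution of the average
closed-loop system the Lyapunov function `V = Ĝ₁² + Ĝ₂²` satisfies
`dV/dt ≤ −(2α₀/ω)√V`. -/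
theorem lyapunov_inequality_average_system
    (H111 H112 H221 H222 K1 K2 ω : ℝ) (hω : 0 < ω)
    (hdd1 : |H112 * K2| < |H111 * K1|) (hdd2 : |H221 * K1| < |H222 * K2|)
    (hneg1 : H111 * K1 < 0) (hneg2 : H222 * K2 < 0)
    (α1 α2 α0 : ℝ)
    (hα1 : α1 = |H111 * K1| - |H112 * K2|) (hα2 : α2 = |H222 * K2| - |H221 * K1|)
    (hα0 : α0 = min α1 α2) :
    (∀ x1 x2 : ℝ,
      2 * x1 * ((1 / ω) * (H111 * K1 * Real.sign x1 + H112 * K2 * Real.sign x2))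
        + 2 * x2 * ((1 / ω) * (H221 * K1 * Real.sign x1 + H222 * K2 * Real.sign x2))
        ≤ -(2 * α0 / ω) * (|x1| + |x2|) ∧
      -(2 * α0 / ω) * (|x1| + |x2|) ≤ -(2 * α0 / ω) * Real.sqrt (x1 ^ 2 + x2 ^ 2)) ∧
    (∀ G1 G2 : ℝ → ℝ, ∀ t : ℝ,
      HasDerivAt G1 ((1 / ω) * (H111 * K1 * Real.sign (G1 t) + H112 * K2 * Real.sign (G2 t))) t →
      HasDerivAt G2 ((1 / ω) * (H221 * K1 * Real.sign (G1 t) + H222 * K2 * Real.sign (G2 t))) t →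
      ∃ V' : ℝ, HasDerivAt (fun s => G1 s ^ 2 + G2 s ^ 2) V' t ∧
        V' ≤ -(2 * α0 / ω) * Real.sqrt (G1 t ^ 2 + G2 t ^ 2)) := by
  have hα0_le1 : α0 ≤ α1 := hα0 ▸ min_le_left α1 α2
  have hα0_le2 : α0 ≤ α2 := hα0 ▸ min_le_right α1 α2
  have hrow1 : H111 * K1 + |H112 * K2| ≤ -α0 := by
    rw [abs_of_neg hneg1] at hα1; linarith
  have hrow2 : H222 * K2 + |H221 * K1| ≤ -α0 := by
    rw [abs_of_neg hneg2] at hα2; linarith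
  have hgain : 0 ≤ 2 * α0 / ω := by
    have : 0 ≤ α0 := by rw [hα0, hα1, hα2]; exact le_min (by linarith) (by linarith)
    positivity
  have pointwise : ∀ x1 x2 : ℝ,
      2 * x1 * ((1 / ω) * (H111 * K1 * sign x1 + H112 * K2 * sign x2))
        + 2 * x2 * ((1 / ω) * (H221 * K1 * sign x1 + H222 * K2 * sign x2))
        ≤ -(2 * α0 / ω) * (|x1| + |x2|) := by
    intro x1 x2
    have h := mul_le_mul_of_nonneg_left (mul_sign_feedback_le hrow1 hrow2 x1 x2)
      (by positivity : (0 : ℝ) ≤ 2 / ω)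
    linear_combination h
  have l1_ge : ∀ x1 x2 : ℝ,
      -(2 * α0 / ω) * (|x1| + |x2|) ≤ -(2 * α0 / ω) * √(x1 ^ 2 + x2 ^ 2) := fun x1 x2 =>
    mul_le_mul_of_nonpos_left (sqrt_sq_add_sq_le_abs_add_abs x1 x2) (neg_nonpos.2 hgain)
  refine ⟨fun x1 x2 => ⟨pointwise x1 x2, l1_ge x1 x2⟩, fun G1 G2 t h1 h2 => ?_⟩
  exact ⟨_, h1.sq_add_sq h2, (pointwise _ _).trans (l1_ge _ _)⟩
end

section
/- Let H¹₁₁, H¹₁₂, H²₂₁, H²₂₂, K₁, K₂ be real constants and ω > 0 satisfying Assumption 1: |H¹₁₂K₂| < |H¹₁₁K₁|, |H²₂₁K₁| < |H²₂₂K₂|, H¹₁₁K₁ < 0 and H²₂₂K₂ < 0, and set α₀ = min(|H¹₁₁K₁| − |H¹₁₂K₂|, |H²₂₂K₂| − |H²₂₁K₁|) > 0. Let Ĝ = (Ĝ₁, Ĝ₂) : ℝ → ℝ² be differentiable on [0, ∞) and satisfy the average closed-loop dynamics dĜ₁/dt = (1/ω)(H¹₁₁K₁ sgn(Ĝ₁(t))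 + H¹₁₂K₂ sgn(Ĝ₂(t))) and dĜ₂/dt = (1/ω)(H²₂₁K₁ sgn(Ĝ₁(t)) + H²₂₂K₂ sgn(Ĝ₂(t))) for all t ≥ 0. Then for all t ≥ 0, ‖Ĝ(t)‖ ≤ max(‖Ĝ(0)‖ − (α₀/ω)·t, 0), where ‖·‖ is the Euclidean norm on ℝ²; in particular, there exists a finite time tₛ ≤ ω‖Ĝ(0)‖/α₀ such that Ĝ(t) = 0 for all t ≥ tₛ. -/
open Real Set

private lemma abs_sign_le' (y : ℝ) : |Real.sign y| ≤ 1 := by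
  rcases lt_trichotomy y 0 with h | h | h
  · rw [Real.sign_of_neg h]; norm_num
  · simp [h]
  · rw [Real.sign_of_pos h]; norm_num

private lemma self_mul_sign' (y : ℝ) : y * Real.sign y = |y| := by
  rcases lt_trichotomy y 0 with h | h | h
  · rw [Real.sign_of_neg h, abs_of_neg h]; ring
  · simp [h]
  · rw [Real.sign_of_pos h, abs_of_pos h]; ring

private lemma maxsq_hasDerivAt (x : ℝ) :
    HasDerivAt (fun y : ℝ => max y 0 ^ 2) (2 * max x 0) x := by
  rcases lt_trichotomy x 0 with h | h | h
  · have h0 : HasDerivAt (fun _ : ℝ => (0 : ℝ)) 0 x := hasDerivAt_const x 0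
    have heq : (fun _ : ℝ => (0 : ℝ)) =ᶠ[nhds x] (fun y : ℝ => max y 0 ^ 2) := by
      filter_upwards [eventually_lt_nhds h] with y hy
      rw [max_eq_right hy.le]; norm_num
    simpa [max_eq_right h.le] using h0.congr_of_eventuallyEq heq.symm
  · subst h
    rw [hasDerivAt_iff_isLittleO]
    have h1 : (fun y : ℝ => max y 0 ^ 2) =O[nhds (0 : ℝ)] fun y => y * y := by
      apply Asymptotics.isBigO_of_le
      intro y
      have : |max y 0| ≤ |y| := by
        rcases le_or_gt y 0 with hy | hy
        · rw [max_eq_right hy]; simp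
        · rw [max_eq_left hy.le]
      calc ‖max y 0 ^ 2‖ = |max y 0| * |max y 0| := by
            rw [Real.norm_eq_abs, sq, abs_mul]
        _ ≤ |y| * |y| := mul_le_mul this this (abs_nonneg _) (abs_nonneg _)
        _ = ‖y * y‖ := by rw [Real.norm_eq_abs, abs_mul]
    have h2 : (fun y : ℝ => y * y) =o[nhds (0 : ℝ)] fun y => y := by
      have ha : (fun y : ℝ => y) =o[nhds (0 : ℝ)] fun _ => (1 : ℝ) :=
        (Asymptotics.isLittleO_one_iff ℝ).2 Filter.tendsto_id
      have hb : (fun y : ℝ => y) =O[nhds (0 : ℝ)] fun y => y :=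
        Asymptotics.isBigO_refl _ _
      simpa using ha.mul_isBigO hb
    simpa using h1.trans_isLittleO h2
  · have hd : HasDerivAt (fun y : ℝ => y ^ 2) (2 * x) x := by
      simpa using hasDerivAt_pow 2 x
    have heq : (fun y : ℝ => y ^ 2) =ᶠ[nhds x] (fun y : ℝ => max y 0 ^ 2) := by
      filter_upwards [eventually_gt_nhds h] with y hy
      rw [max_eq_left hy.le]
    simpa [max_eq_left h.le] using hd.congr_of_eventuallyEq heq.symm

/-- finite-time stability of the average pseudogradient dynamics:
under Assumption 1, any solution `Ĝ = (Ĝ₁, Ĝ₂)` of the average closed-loop system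
satisfies `‖Ĝ(t)‖ ≤ max (‖Ĝ(0)‖ − (α₀/ω)t) 0` for all `t ≥ 0`; in particular there is a
finite time `tₛ ≤ ω‖Ĝ(0)‖/α₀` after which `Ĝ ≡ 0`. Here the Euclidean norm on `ℝ²` is
written as `√(Ĝ₁² + Ĝ₂²)`. -/
theorem finite_time_stability_average_pseudogradient
    (H111 H112 H221 H222 K1 K2 ω : ℝ) (hω : 0 < ω)
    (hdd1 : |H112 * K2| < |H111 * K1|) (hdd2 : |H221 * K1| < |H222 * K2|)
    (hneg1 : H111 * K1 < 0) (hneg2 : H222 * K2 < 0)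
    (α0 : ℝ) (hα0 : α0 = min (|H111 * K1| - |H112 * K2|) (|H222 * K2| - |H221 * K1|))
    (G1 G2 : ℝ → ℝ)
    (hode1 : ∀ t ∈ Ici (0 : ℝ), HasDerivWithinAt G1
      ((1 / ω) * (H111 * K1 * Real.sign (G1 t) + H112 * K2 * Real.sign (G2 t))) (Ici 0) t)
    (hode2 : ∀ t ∈ Ici (0 : ℝ), HasDerivWithinAt G2
      ((1 / ω) * (H221 * K1 * Real.sign (G1 t) + H222 * K2 * Real.sign (G2 t))) (Ici 0) t) :
    (∀ t ∈ Ici (0 : ℝ),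
      Real.sqrt (G1 t ^ 2 + G2 t ^ 2)
        ≤ max (Real.sqrt (G1 0 ^ 2 + G2 0 ^ 2) - (α0 / ω) * t) 0) ∧
    (∃ ts : ℝ, 0 ≤ ts ∧ ts ≤ ω * Real.sqrt (G1 0 ^ 2 + G2 0 ^ 2) / α0 ∧
      ∀ t : ℝ, ts ≤ t → G1 t = 0 ∧ G2 t = 0) := by
  have hα0pos : 0 < α0 := by
    rw [hα0]; exact lt_min (sub_pos.2 hdd1) (sub_pos.2 hdd2)
  have hapos : 0 < α0 / ω := div_pos hα0pos hω
  set g0 := Real.sqrt (G1 0 ^ 2 + G2 0 ^ 2) with hg0def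
  have hg0 : 0 ≤ g0 := Real.sqrt_nonneg _
  set U : ℝ → ℝ := fun t => G1 t ^ 2 + G2 t ^ 2 with hUdef
  set D1 : ℝ → ℝ := fun t =>
    (1 / ω) * (H111 * K1 * Real.sign (G1 t) + H112 * K2 * Real.sign (G2 t)) with hD1def
  set D2 : ℝ → ℝ := fun t =>
    (1 / ω) * (H221 * K1 * Real.sign (G1 t) + H222 * K2 * Real.sign (G2 t)) with hD2def
  set U' : ℝ → ℝ := fun t => 2 * G1 t * D1 t + 2 * G2 t * D2 t with hU'def
  have hU' : ∀ t ∈ Ici (0 : ℝ), HasDerivWithinAt U (U' t) (Ici 0) t := by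
    intro t ht
    have h1 := (hode1 t ht).fun_pow 2
    have h2 := (hode2 t ht).fun_pow 2
    refine (h1.fun_add h2).congr_deriv ?_
    simp only [hU'def, hD1def, hD2def]
    push_cast
    ring
  have hUcont : ContinuousOn U (Ici 0) := fun t ht => (hU' t ht).continuousWithinAt
  have hUnn : ∀ t, 0 ≤ U t := fun t => by positivity
  -- pointwise bounds
  have e1 : ∀ t, G1 t * D1 t ≤ -(α0 / ω) * |G1 t| := by
    intro t
    have hs : G1 t * Real.sign (G1 t) = |G1 t| := self_mul_sign' _
    have hb : H112 * K2 * (G1 t * Real.sign (G2 t)) ≤ |H112 * K2| * |G1 t| := by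
      calc H112 * K2 * (G1 t * Real.sign (G2 t))
          ≤ |H112 * K2 * (G1 t * Real.sign (G2 t))| := le_abs_self _
        _ = |H112 * K2| * (|G1 t| * |Real.sign (G2 t)|) := by rw [abs_mul (H112 * K2), abs_mul (G1 t)]
        _ ≤ |H112 * K2| * (|G1 t| * 1) := by
            gcongr
            exact abs_sign_le' _
        _ = |H112 * K2| * |G1 t| := by ring
    have hp : H111 * K1 * |G1 t| = -(|H111 * K1| * |G1 t|) := by
      rw [abs_of_neg hneg1]; ring
    have hmin : α0 ≤ |H111 * K1| - |H112 * K2| := hα0 ▸ min_le_left _ _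
    have key : H111 * K1 * (G1 t * Real.sign (G1 t))
        + H112 * K2 * (G1 t * Real.sign (G2 t)) ≤ -α0 * |G1 t| := by
      rw [hs, hp]
      nlinarith [abs_nonneg (G1 t)]
    have hrw : G1 t * D1 t = (1 / ω) * (H111 * K1 * (G1 t * Real.sign (G1 t))
        + H112 * K2 * (G1 t * Real.sign (G2 t))) := by
      simp only [hD1def]; ring
    rw [hrw]
    have h1ω : 0 ≤ 1 / ω := by positivity
    calc (1 / ω) * (H111 * K1 * (G1 t * Real.sign (G1 t))
        + H112 * K2 * (G1 t * Real.sign (G2 t)))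
        ≤ (1 / ω) * (-α0 * |G1 t|) := mul_le_mul_of_nonneg_left key h1ω
      _ = -(α0 / ω) * |G1 t| := by ring
  have e2 : ∀ t, G2 t * D2 t ≤ -(α0 / ω) * |G2 t| := by
    intro t
    have hs : G2 t * Real.sign (G2 t) = |G2 t| := self_mul_sign' _
    have hb : H221 * K1 * (G2 t * Real.sign (G1 t)) ≤ |H221 * K1| * |G2 t| := by
      calc H221 * K1 * (G2 t * Real.sign (G1 t))
          ≤ |H221 * K1 * (G2 t * Real.sign (G1 t))| := le_abs_self _
        _ = |H221 * K1| * (|G2 t| * |Real.sign (G1 t)|) := by rw [abs_mul (H221 * K1), abs_mul (G2 t)]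
        _ ≤ |H221 * K1| * (|G2 t| * 1) := by
            gcongr
            exact abs_sign_le' _
        _ = |H221 * K1| * |G2 t| := by ring
    have hp : H222 * K2 * |G2 t| = -(|H222 * K2| * |G2 t|) := by
      rw [abs_of_neg hneg2]; ring
    have hmin : α0 ≤ |H222 * K2| - |H221 * K1| := hα0 ▸ min_le_right _ _
    have key : H221 * K1 * (G2 t * Real.sign (G1 t))
        + H222 * K2 * (G2 t * Real.sign (G2 t)) ≤ -α0 * |G2 t| := by
      rw [hs, hp]
      nlinarith [abs_nonneg (G2 t)]
    have hrw : G2 t * D2 t = (1 / ω) * (H221 * K1 * (G2 t * Real.sign (G1 t))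
        + H222 * K2 * (G2 t * Real.sign (G2 t))) := by
      simp only [hD2def]; ring
    rw [hrw]
    have h1ω : 0 ≤ 1 / ω := by positivity
    calc (1 / ω) * (H221 * K1 * (G2 t * Real.sign (G1 t))
        + H222 * K2 * (G2 t * Real.sign (G2 t)))
        ≤ (1 / ω) * (-α0 * |G2 t|) := mul_le_mul_of_nonneg_left key h1ω
      _ = -(α0 / ω) * |G2 t| := by ring
  have hsqrt : ∀ t, Real.sqrt (U t) ≤ |G1 t| + |G2 t| := by
    intro t
    have hle : U t ≤ (|G1 t| + |G2 t|) ^ 2 := by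
      simp only [hUdef]
      nlinarith [sq_abs (G1 t), sq_abs (G2 t),
        mul_nonneg (abs_nonneg (G1 t)) (abs_nonneg (G2 t))]
    calc Real.sqrt (U t) ≤ Real.sqrt ((|G1 t| + |G2 t|) ^ 2) := Real.sqrt_le_sqrt hle
      _ = |G1 t| + |G2 t| := Real.sqrt_sq (by positivity)
  have hkey : ∀ t, U' t ≤ -(2 * (α0 / ω)) * Real.sqrt (U t) := by
    intro t
    have h1 := e1 t
    have h2 := e2 t
    have h3 := mul_le_mul_of_nonneg_left (hsqrt t)
      (by positivity : (0 : ℝ) ≤ 2 * (α0 / ω))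
    simp only [hU'def]
    nlinarith
  -- comparison with the epsilon-perturbed barrier
  have main : ∀ T, 0 ≤ T → ∀ ε : ℝ, 0 < ε →
      U T ≤ max (g0 + ε - α0 / ω * T) 0 ^ 2 + ε := by
    intro T hT ε hε
    have hBd : ∀ x : ℝ, HasDerivAt (fun t => max (g0 + ε - α0 / ω * t) 0 ^ 2 + ε)
        (2 * max (g0 + ε - α0 / ω * x) 0 * (-(α0 / ω))) x := by
      intro x
      have hl : HasDerivAt (fun t : ℝ => g0 + ε - α0 / ω * t) (-(α0 / ω)) x := by
        simpa using ((hasDerivAt_id x).const_mul (α0 / ω)).const_sub (g0 + ε)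
      exact ((maxsq_hasDerivAt (g0 + ε - α0 / ω * x)).comp x hl).add_const ε
    have hBcont : Continuous fun t : ℝ => max (g0 + ε - α0 / ω * t) 0 ^ 2 + ε :=
      (((continuous_const.sub (continuous_const.mul continuous_id)).max
        continuous_const).pow 2).add continuous_const
    have ha0 : U 0 ≤ max (g0 + ε - α0 / ω * 0) 0 ^ 2 + ε := by
      have hU0 : U 0 = g0 ^ 2 := by
        simp only [hUdef, hg0def]
        exact (Real.sq_sqrt (by positivity)).symm
      have hm : max (g0 + ε - α0 / ω * 0) 0 = g0 + ε := by
        rw [mul_zero, sub_zero, max_eq_left (by positivity)]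
      rw [hU0, hm]
      nlinarith
    have hbd : ∀ x ∈ Ico (0 : ℝ) T, U x = max (g0 + ε - α0 / ω * x) 0 ^ 2 + ε →
        U' x < 2 * max (g0 + ε - α0 / ω * x) 0 * (-(α0 / ω)) := ?_
    · exact image_le_of_deriv_right_lt_deriv_boundary'
        (hUcont.mono (Icc_subset_Ici_self))
        (fun x hx => (hU' x hx.1).mono (Ici_subset_Ici.2 hx.1))
        ha0 hBcont.continuousOn
        (fun x _ => (hBd x).hasDerivWithinAt)
        hbd (right_mem_Icc.2 hT)
    · intro x hx hfB
      have hm : 0 ≤ max (g0 + ε - α0 / ω * x) 0 := le_max_right _ _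
      have hlt : max (g0 + ε - α0 / ω * x) 0 < Real.sqrt (U x) := by
        rw [hfB]
        calc max (g0 + ε - α0 / ω * x) 0
            = Real.sqrt (max (g0 + ε - α0 / ω * x) 0 ^ 2) := (Real.sqrt_sq hm).symm
          _ < Real.sqrt (max (g0 + ε - α0 / ω * x) 0 ^ 2 + ε) :=
            Real.sqrt_lt_sqrt (sq_nonneg _) (lt_add_of_pos_right _ hε)
      calc U' x ≤ -(2 * (α0 / ω)) * Real.sqrt (U x) := hkey x
        _ < 2 * max (g0 + ε - α0 / ω * x) 0 * (-(α0 / ω)) := by nlinarith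
  -- take the limit ε → 0⁺
  have hbound : ∀ T, 0 ≤ T → U T ≤ max (g0 - α0 / ω * T) 0 ^ 2 := by
    intro T hT
    have hc : Continuous fun ε : ℝ => max (g0 + ε - α0 / ω * T) 0 ^ 2 + ε :=
      ((((continuous_const.add continuous_id).sub continuous_const).max
        continuous_const).pow 2).add continuous_id
    have ht : Filter.Tendsto (fun ε : ℝ => max (g0 + ε - α0 / ω * T) 0 ^ 2 + ε)
        (nhdsWithin 0 (Ioi 0)) (nhds (max (g0 - α0 / ω * T) 0 ^ 2)) := by
      have h0 : Filter.Tendsto (fun ε : ℝ => max (g0 + ε - α0 / ω * T) 0 ^ 2 + ε)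
          (nhdsWithin 0 (Ioi 0)) (nhds (max (g0 + 0 - α0 / ω * T) 0 ^ 2 + 0)) :=
        (hc.tendsto 0).mono_left nhdsWithin_le_nhds
      simpa using h0
    refine ge_of_tendsto ht ?_
    filter_upwards [self_mem_nhdsWithin] with ε hε
    exact main T hT ε hε
  constructor
  · intro t ht
    have h := hbound t ht
    have h2 : Real.sqrt (U t) ≤ Real.sqrt (max (g0 - α0 / ω * t) 0 ^ 2) :=
      Real.sqrt_le_sqrt h
    rwa [Real.sqrt_sq (le_max_right _ _)] at h2
  · refine ⟨ω * g0 / α0, by positivity, le_refl _, ?_⟩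
    intro t htts
    have hts0 : (0 : ℝ) ≤ ω * g0 / α0 := by positivity
    have ht0 : 0 ≤ t := le_trans hts0 htts
    have h := hbound t ht0
    have hmax : g0 - α0 / ω * t ≤ 0 := by
      have heq : α0 / ω * (ω * g0 / α0) = g0 := by
        field_simp
      have hle : α0 / ω * (ω * g0 / α0) ≤ α0 / ω * t :=
        mul_le_mul_of_nonneg_left htts (le_of_lt hapos)
      rw [heq] at hle
      linarith
    rw [max_eq_right hmax] at h
    have h' : G1 t ^ 2 + G2 t ^ 2 ≤ 0 := by
      have h00 : ((0 : ℝ)) ^ 2 = 0 := by norm_num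
      rw [h00] at h
      simpa only [hUdef] using h
    have h1 : G1 t ^ 2 = 0 := le_antisymm (by linarith [sq_nonneg (G2 t)]) (sq_nonneg _)
    have h2 : G2 t ^ 2 = 0 := le_antisymm (by linarith [sq_nonneg (G1 t)]) (sq_nonneg _)
    exact ⟨pow_eq_zero_iff two_ne_zero |>.1 h1, pow_eq_zero_iff two_ne_zero |>.1 h2⟩
end
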